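/- (The search step of Hier-Prox always succeeds.) Let v ∈ ℝ, u ∈ ℝ^K, λ ≥ 0, M > 0. Sort the entries of u so that |u_(1)| ≥ ... ≥ |u_(K)|, with conventions |u_(0)| = +∞ and |u_(K+1)| = 0, and for m ∈ {0,1,...,K} define w_m = (M/(1+mM²)) · S_λ( |v| + M·Σ_{i=1}^m |u_(i)| ). Then there exists m ∈ {0,1,...,K} such that |u_(m+1)| ≤ w_m ≤ |u_(m)|. -/
import Mathlib


/-- Soft-thresholding operator `S_t(x) = sign(x) · max(|x| − t, 0)`. -/
noncomputable def st (t x : ℝ) : ℝ := Real.sign x * max (|x| - t) 0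

/-- `du u σ m = |u_(m)|`, the `m`-th largest absolute entry of `u` (1-based, via a sorting
permutation `σ`), with the out-of-range convention `|u_(m)| = 0` for `m > K`
(implementing `|u_(K+1)| = 0`). -/
noncomputable def du {K : ℕ} (u : Fin K → ℝ) (σ : Equiv.Perm (Fin K)) (m : ℕ) : ℝ :=
  if h : m - 1 < K then |u (σ ⟨m - 1, h⟩)| else 0

/-- `w_m = (M/(1+mM²)) · S_λ( |v| + M·Σ_{i=1}^m |u_(i)| )`. -/
noncomputable def wm {K : ℕ} (u : Fin K → ℝ) (σ : Equiv.Perm (Fin K))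
    (lam M : ℝ) (v : ℝ) (m : ℕ) : ℝ :=
  (M / (1 + (m : ℝ) * M ^ 2)) * st lam (|v| + M * ∑ i ∈ Finset.Icc 1 m, du u σ i)

lemma du_nonneg {K : ℕ} (u : Fin K → ℝ) (σ : Equiv.Perm (Fin K)) (m : ℕ) :
    0 ≤ du u σ m := by
  unfold du; split
  · exact abs_nonneg _
  · exact le_refl 0

lemma st_of_nonneg (lam x : ℝ) (hlam : 0 ≤ lam) (hx : 0 ≤ x) :
    st lam x = max (x - lam) 0 := by
  rcases eq_or_lt_of_le hx with h | h
  · subst h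
    rw [st, Real.sign_zero, zero_mul,
      max_eq_right (by linarith : (0:ℝ) - lam ≤ 0)]
  · rw [st, Real.sign_of_pos h, abs_of_pos h, one_mul]

lemma S_nonneg {K : ℕ} (u : Fin K → ℝ) (σ : Equiv.Perm (Fin K)) (M v : ℝ) (hM : 0 < M)
    (m : ℕ) : 0 ≤ |v| + M * ∑ i ∈ Finset.Icc 1 m, du u σ i := by
  have : 0 ≤ ∑ i ∈ Finset.Icc 1 m, du u σ i :=
    Finset.sum_nonneg fun i _ => du_nonneg u σ i
  have := abs_nonneg v
  nlinarith

/-- The search step of Hier-Prox always succeeds: there exists `m ∈ {0,1,…,K}` such that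
`|u_(m+1)| ≤ w_m ≤ |u_(m)|` (conventions `|u_(0)| = +∞`, i.e. the upper condition is
vacuous at `m = 0`, and `|u_(K+1)| = 0`). -/
theorem stmt16 (K : ℕ) (hK : 1 ≤ K)
    (lam M : ℝ) (hlam : 0 ≤ lam) (hM : 0 < M)
    (v : ℝ) (u : Fin K → ℝ)
    (σ : Equiv.Perm (Fin K))
    (hsort : ∀ i j : Fin K, i ≤ j → |u (σ j)| ≤ |u (σ i)|) :
    ∃ m : ℕ, m ≤ K ∧ du u σ (m + 1) ≤ wm u σ lam M v m ∧
      (0 < m → wm u σ lam M v m ≤ du u σ m) := by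
  have hwm_nonneg : ∀ m : ℕ, 0 ≤ wm u σ lam M v m := by
    intro m
    unfold wm
    have hD : 0 < 1 + (m : ℝ) * M ^ 2 := by positivity
    have hst : 0 ≤ st lam (|v| + M * ∑ i ∈ Finset.Icc 1 m, du u σ i) := by
      rw [st_of_nonneg _ _ hlam (S_nonneg u σ M v hM m)]
      exact le_max_right _ _
    positivity
  have hPK : du u σ (K + 1) ≤ wm u σ lam M v K := by
    have : du u σ (K + 1) = 0 := by
      unfold du
      rw [dif_neg]; simp
    rw [this]; exact hwm_nonneg K
  have hex : ∃ m, du u σ (m + 1) ≤ wm u σ lam M v m := ⟨K, hPK⟩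
  have hspec := Nat.find_spec hex
  have hle := Nat.find_min' hex hPK
  have hmin := fun k (hk : k < Nat.find hex) => Nat.find_min hex hk
  set m := Nat.find hex with hm
  clear_value m
  refine ⟨m, hle, hspec, ?_⟩
  intro hmpos
  obtain ⟨n, rfl⟩ : ∃ n, m = n + 1 := ⟨m - 1, (Nat.succ_pred_eq_of_pos hmpos).symm⟩
  have hfail : wm u σ lam M v n < du u σ (n + 1) := by
    have := hmin n (by omega)
    push_neg at this
    exact this
  -- now show wm (n+1) ≤ du (n+1)
  set d := du u σ (n + 1) with hd
  have hd0 : 0 ≤ d := du_nonneg u σ (n + 1)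
  set Sn := |v| + M * ∑ i ∈ Finset.Icc 1 n, du u σ i with hSn
  have hSn0 : 0 ≤ Sn := S_nonneg u σ M v hM n
  have hsum : (|v| + M * ∑ i ∈ Finset.Icc 1 (n + 1), du u σ i) = Sn + M * d := by
    rw [hSn, Finset.sum_Icc_succ_top (by omega : 1 ≤ n + 1)]
    ring
  have hD1 : (0:ℝ) < 1 + (n : ℝ) * M ^ 2 := by positivity
  have hD2 : (0:ℝ) < 1 + ((n : ℝ) + 1) * M ^ 2 := by positivity
  have hfail' : M * max (Sn - lam) 0 < d * (1 + (n : ℝ) * M ^ 2) := by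
    rw [wm, st_of_nonneg _ _ hlam hSn0, div_mul_eq_mul_div, div_lt_iff₀ hD1] at hfail
    exact hfail
  rw [wm, hsum, st_of_nonneg _ _ hlam (by nlinarith), Nat.cast_add, Nat.cast_one,
    div_mul_eq_mul_div, div_le_iff₀ hD2]
  rcases le_or_gt (Sn + M * d - lam) 0 with h | h
  · rw [max_eq_right h]
    nlinarith
  · rw [max_eq_left h.le]
    have h1 : M * (Sn - lam) ≤ M * max (Sn - lam) 0 :=
      mul_le_mul_of_nonneg_left (le_max_left _ _) hM.le
    nlinarith
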